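/- arXiv:2204.05969 — 2 statements merged into one kernel-verified Lean document; each statement's English description precedes it below -/
import Mathlib

section
/- (Lemma 1, prefix case, pointwise form) Let x ≥ 2 and let p, q be positions of T with p + x − 1 ≤ n and q + x − 1 ≤ n such that T[p..p+x−1] = T[q..q+x−1] (the two length-x substrings are equal as strings), position p + x − 1 is LMS-type, and position q + x − 1 is L-type. Then suffix(q) ≺ suffix(p). -/
/-- Auxiliary S-type classification with explicit fuel `n - i`. -/
def STypeAux {α : Type*} [LinearOrder α] (T : ℕ → α) : ℕ → ℕ → Prop
  | 0, _ => True
  | k + 1, i => T i < T (i + 1) ∨ (T i = T (i + 1) ∧ STypeAux T k (i + 1))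

/-- Position `i` of `T[1..n]` is S-type. -/
def SType {α : Type*} [LinearOrder α] (T : ℕ → α) (n i : ℕ) : Prop :=
  STypeAux T (n - i) i

/-- Auxiliary L-type classification with explicit fuel `n - i`. -/
def LTypeAux {α : Type*} [LinearOrder α] (T : ℕ → α) : ℕ → ℕ → Prop
  | 0, _ => False
  | k + 1, i => T (i + 1) < T i ∨ (T i = T (i + 1) ∧ LTypeAux T k (i + 1))

/-- Position `i` of `T[1..n]` is L-type. -/
def LType {α : Type*} [LinearOrder α] (T : ℕ → α) (n i : ℕ) : Prop :=
  LTypeAux T (n - i) i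

/-- Position `i` of `T[1..n]` is LMS-type. -/
def LMSType {α : Type*} [LinearOrder α] (T : ℕ → α) (n i : ℕ) : Prop :=
  1 < i ∧ SType T n i ∧ LType T n (i - 1)

/-- `suf T n i` is the suffix `T[i..n]` of `T[1..n]` as a list. -/
def suf {α : Type*} (T : ℕ → α) (n i : ℕ) : List α :=
  (List.range (n + 1 - i)).map fun k => T (i + k)

/-- rank of suffix p among all suffixes of T[1..n]. -/
noncomputable def rnk {α : Type*} [LinearOrder α] (T : ℕ → α) (n p : ℕ) : ℕ :=
  1 + Set.ncard {q : ℕ | 1 ≤ q ∧ q ≤ n ∧ List.Lex (· < ·) (suf T n q) (suf T n p)}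

/-- `p` is an LMS-suffix occurrence of string `S` (|S| ≥ 2) in `T[1..n]`. -/
def IsLMSSuffixOcc {α : Type*} [LinearOrder α] (T : ℕ → α) (n : ℕ) (S : List α) (p : ℕ) : Prop :=
  1 ≤ p ∧ p + S.length - 1 ≤ n ∧
    ((List.range S.length).map fun k => T (p + k)) = S ∧
    LMSType T n (p + S.length - 1) ∧
    ∀ k, p < k → k < p + S.length - 1 → ¬ LMSType T n k

section aux
variable {α : Type*} [LinearOrder α] {T : ℕ → α} {n i j : ℕ}

lemma lt_of_LType (h : LType T n j) : j < n := by
  by_contra hj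
  have h0 : n - j = 0 := by omega
  unfold LType at h; rw [h0] at h; exact h

lemma LType_step (h : LType T n j) :
    T (j + 1) < T j ∨ (T j = T (j + 1) ∧ LType T n (j + 1)) := by
  have hj := lt_of_LType h
  unfold LType at h ⊢
  rw [show n - j = (n - (j + 1)) + 1 by omega] at h
  exact h

lemma SType_step (hin : i < n) (h : SType T n i) :
    T i < T (i + 1) ∨ (T i = T (i + 1) ∧ SType T n (i + 1)) := by
  unfold SType at h ⊢
  rw [show n - i = (n - (i + 1)) + 1 by omega] at h
  exact h

lemma suf_cons (T : ℕ → α) (h : i ≤ n) :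
    suf T n i = T i :: suf T n (i + 1) := by
  unfold suf
  rw [show n + 1 - i = (n + 1 - (i + 1)) + 1 by omega, List.range_succ_eq_map,
    List.map_cons, List.map_map]
  simp only [Nat.add_zero]
  congr 1
  refine List.map_congr_left fun k _ => ?_
  simp only [Function.comp_apply]
  congr 1
  omega

lemma key_lemma (T : ℕ → α) (n : ℕ) (sent : α) (hTn : T n = sent)
    (hT : ∀ i, 1 ≤ i → i < n → T i ≠ sent) :
    ∀ m i j, n - j ≤ m → 1 ≤ j → i ≤ n → SType T n i → LType T n j →
      T i = T j → List.Lex (· < ·) (suf T n j) (suf T n i) := by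
  intro m
  induction m with
  | zero =>
    intro i j hm hj hi hS hL heq
    exact absurd (lt_of_LType hL) (by omega)
  | succ m ih =>
    intro i j hm hj hi hS hL heq
    have hjn := lt_of_LType hL
    have hin : i < n := by
      rcases lt_or_eq_of_le hi with h | h
      · exact h
      · exact absurd (by rw [← heq, h, hTn]) (hT j hj hjn)
    rw [suf_cons T hjn.le, suf_cons T hi, ← heq]
    apply List.Lex.cons
    rcases LType_step hL with h1 | ⟨h1, hL'⟩
    · have h2 : T (j + 1) < T (i + 1) := by
        rcases SType_step hin hS with h | ⟨h, _⟩
        · exact lt_trans (heq ▸ h1) h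
        · exact lt_of_lt_of_le (heq ▸ h1) h.le
      rw [suf_cons T (by omega : j + 1 ≤ n), suf_cons T (by omega : i + 1 ≤ n)]
      exact List.Lex.rel h2
    · rcases SType_step hin hS with h | ⟨h, hS'⟩
      · have h2 : T (j + 1) < T (i + 1) := by rw [← h1, ← heq]; exact h
        rw [suf_cons T (by omega : j + 1 ≤ n), suf_cons T (by omega : i + 1 ≤ n)]
        exact List.Lex.rel h2
      · exact ih (i + 1) (j + 1) (by omega) (by omega) (by omega) hS' hL'
          (by rw [← h, ← h1, heq])

lemma pref_lemma (T : ℕ → α) (n : ℕ) :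
    ∀ m p q, p + m ≤ n → q + m ≤ n → (∀ k, k < m → T (p + k) = T (q + k)) →
      List.Lex (· < ·) (suf T n (q + m)) (suf T n (p + m)) →
      List.Lex (· < ·) (suf T n q) (suf T n p) := by
  intro m
  induction m with
  | zero => intro p q _ _ _ h; simpa using h
  | succ m ih =>
    intro p q hp hq heq h
    rw [suf_cons T (by omega : q ≤ n), suf_cons T (by omega : p ≤ n)]
    have h0 : T p = T q := by simpa using heq 0 (by omega)
    rw [← h0]
    apply List.Lex.cons
    apply ih (p + 1) (q + 1) (by omega) (by omega)
    · intro k hk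
      have := heq (k + 1) (by omega)
      rwa [show p + (k + 1) = p + 1 + k by omega,
        show q + (k + 1) = q + 1 + k by omega] at this
    · rwa [show q + 1 + m = q + (m + 1) by omega,
        show p + 1 + m = p + (m + 1) by omega]

end aux

/-- Lemma 1, prefix case, pointwise: if the length-`x` (`x ≥ 2`)
substrings of `T` at `p` and `q` coincide, `p + x - 1` is LMS-type and
`q + x - 1` is L-type, then `suffix(q) ≺ suffix(p)`. -/
theorem stmt8 {α : Type*} [LinearOrder α] (T : ℕ → α) (n : ℕ) (sent : α)
    (hn : 2 ≤ n) (hTn : T n = sent)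
    (hsent : ∀ a : α, a ≠ sent → sent < a)
    (hT : ∀ i, 1 ≤ i → i < n → T i ≠ sent) :
    ∀ x p q, 2 ≤ x → 1 ≤ p → 1 ≤ q → p + x - 1 ≤ n → q + x - 1 ≤ n →
      (∀ k, k < x → T (p + k) = T (q + k)) →
      LMSType T n (p + x - 1) → LType T n (q + x - 1) →
      List.Lex (· < ·) (suf T n q) (suf T n p) := by
  intro x p q hx hp hq hpn hqn heq hLMS hL
  apply pref_lemma T n (x - 1) p q (by omega) (by omega)
    (fun k hk => heq k (by omega))
  have hS : SType T n (p + (x - 1)) := by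
    rw [show p + (x - 1) = p + x - 1 by omega]; exact hLMS.2.1
  have hL' : LType T n (q + (x - 1)) := by
    rw [show q + (x - 1) = q + x - 1 by omega]; exact hL
  exact key_lemma T n sent hTn hT n (p + (x - 1)) (q + (x - 1)) (by omega)
    (by omega) (by omega) hS hL' (heq (x - 1) (by omega))
end

section
/- (Lemma 5, run-length form) Let S be a nonempty string over Σ, let P = {p ∈ [1,n] : S is a prefix of suffix(p)} be nonempty, and suppose there is a symbol s ∈ Σ such that T[p−1] = s for every p ∈ P (under the convention T[0] = T[n] = $). Then there exists an integer r such that {rank(p) : p ∈ P} = {r, r+1, …, r+|P|−1}, and BWT[k] = s for every k with r ≤ k ≤ r+|P|−1. That is, the BWT entries at the ranks of the suffixes prefixed by S form a single equal-symbol run (s, |P|), regardless of the internal order of those suffixes. -/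
namespace List

variable {α : Type*} [LinearOrder α]

theorem IsPrefix.not_lt {S A : List α} (h : S <+: A) : ¬ A < S :=
  h.le

theorem IsPrefix.lt_of_lt_of_not_isPrefix {S A B : List α} (hA : S <+: A) (hSB : S < B)
    (hB : ¬ S <+: B) : A < B := by
  induction S generalizing A B with
  | nil => exact absurd nil_prefix hB
  | cons s S ih =>
    obtain ⟨t, rfl⟩ := hA
    cases B with
    | nil => exact absurd hSB not_lex_nil
    | cons b B =>
      rcases cons_lex_cons_iff.1 hSB with hsb | ⟨rfl, hSB'⟩
      · exact Lex.rel hsb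
      · exact Lex.cons (ih (prefix_append S t) hSB' fun h => hB (prefix_cons_inj s |>.2 h))

theorem IsPrefix.lt_iff_lt {S A B : List α} (hA : S <+: A) (hB : ¬ S <+: B) :
    B < A ↔ B < S := by
  refine ⟨fun hBA => lt_of_not_ge fun hSB => ?_,
    fun hBS => lt_of_lt_of_le hBS (_root_.not_lt.1 hA.not_lt)⟩
  have hSB : S < B := hSB.lt_of_ne fun h => hB (h ▸ prefix_refl S)
  exact lt_asymm hBA (hA.lt_of_lt_of_not_isPrefix hSB hB)

end List

namespace Finset

theorem image_card_filter_lt_eq_range {ι γ : Type*} [LinearOrder γ] {s : Finset ι}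
    {f : ι → γ} (hf : Set.InjOn f s) :
    s.image (fun x => #{y ∈ s | f y < f x}) = range #s := by
  have hlt_card : ∀ x ∈ s, #{y ∈ s | f y < f x} < #s := fun x hx =>
    card_lt_card (filter_ssubset.2 ⟨x, hx, lt_irrefl _⟩)
  have hmono : ∀ x ∈ s, ∀ y, f x < f y → #{z ∈ s | f z < f x} < #{z ∈ s | f z < f y} :=
    fun x hx y hxy => card_lt_card <| (ssubset_iff_of_subset
      (monotone_filter_right _ fun _ _ h => lt_trans h hxy)).2 ⟨x, by simp [hx, hxy], by simp⟩
  have hinj : Set.InjOn (fun x => #{y ∈ s | f y < f x}) s := by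
    intro x hx y hy hxy
    refine hf hx hy (le_antisymm ?_ ?_) <;> refine not_lt.1 fun h => ?_
    · exact (hmono y hy x h).ne hxy.symm
    · exact (hmono x hx y h).ne hxy
  refine eq_of_subset_of_card_le (fun k hk => ?_) ?_
  · obtain ⟨x, hx, rfl⟩ := mem_image.1 hk
    exact mem_range.2 (hlt_card x hx)
  · rw [card_range, card_image_of_injOn hinj]

theorem image_card_filter_lt_filter_isPrefix {ι α : Type*} [LinearOrder α] {U : Finset ι}
    {key : ι → List α} (hkey : Set.InjOn key U) (S : List α) :
    {p ∈ U | S <+: key p}.image (fun p => #{q ∈ U | key q < key p}) =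
      Ico #{q ∈ U | key q < S} (#{q ∈ U | key q < S} + #{p ∈ U | S <+: key p}) := by
  set P := {p ∈ U | S <+: key p}
  have hsplit : ∀ p ∈ P,
      #{q ∈ U | key q < key p} = #{q ∈ U | key q < S} + #{q ∈ P | key q < key p} := by
    classical
    intro p hp
    have hpS : S <+: key p := (mem_filter.1 hp).2
    rw [← card_union_of_disjoint]
    · congr 1
      ext q
      by_cases hqS : S <+: key q
      · simp [P, hqS, hqS.not_lt]
      · simp [P, hqS, hpS.lt_iff_lt hqS]
    · exact disjoint_left.2 fun q hq hq' =>
        (mem_filter.1 (mem_filter.1 hq').1).2.not_lt (mem_filter.1 hq).2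
  calc P.image (fun p => #{q ∈ U | key q < key p})
      = P.image (fun p => #{q ∈ U | key q < S} + #{q ∈ P | key q < key p}) :=
        image_congr hsplit
    _ = (range #P).image (#{q ∈ U | key q < S} + ·) := by
        rw [← image_card_filter_lt_eq_range (hkey.mono (filter_subset _ U)), image_image]
        -- the two filters differ only in the `<` instance on lists (core's vs. the linear order's)
        refine image_congr fun p _ => congrArg _ (congrArg card ?_)
        ext q
        simp only [P, mem_filter]
    _ = _ := by rw [range_eq_Ico, image_add_left_Ico, add_zero]

end Finset

open Finset

theorem suf_injOn {α : Type*} (T : ℕ → α) (n : ℕ) :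
    Set.InjOn (suf T n) (Set.Iic (n + 1)) := fun p hp q hq h => by
  have := congrArg List.length h
  simp only [suf, List.length_map, List.length_range] at this
  simp only [Set.mem_Iic] at hp hq
  omega

section SuffixRank

variable {α : Type*} [LinearOrder α] (T : ℕ → α) (n : ℕ)

theorem rnk_eq_one_add_card (p : ℕ) :
    rnk T n p = 1 + #{q ∈ Icc 1 n | suf T n q < suf T n p} := by
  rw [rnk, ← Set.ncard_coe_finset]
  congr 2
  ext q
  simp [and_assoc]

theorem rnk_le {p : ℕ} (hp1 : 1 ≤ p) (hpn : p ≤ n) : rnk T n p ≤ n := by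
  have : #{q ∈ Icc 1 n | suf T n q < suf T n p} < #(Icc 1 n) :=
    card_lt_card (filter_ssubset.2 ⟨p, mem_Icc.2 ⟨hp1, hpn⟩, lt_irrefl _⟩)
  rw [Nat.card_Icc] at this
  rw [rnk_eq_one_add_card]
  omega

end SuffixRank

theorem stmt14_general {α : Type*} [LinearOrder α] (T : ℕ → α) (n : ℕ)
    -- the suffix array is the inverse of rank, and BWT k = T (SA k - 1):
    (SA : ℕ → ℕ) (hSA : ∀ p, 1 ≤ p → p ≤ n → SA (rnk T n p) = p)
    (bwt : ℕ → α) (hbwt : ∀ k, 1 ≤ k → k ≤ n → bwt k = T (SA k - 1))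
    (S : List α) (s : α)
    (hs : ∀ p, 1 ≤ p → p ≤ n → S <+: suf T n p → T (p - 1) = s) :
    ∃ r : ℕ,
      rnk T n '' {p : ℕ | 1 ≤ p ∧ p ≤ n ∧ S <+: suf T n p} =
        Set.Icc r (r + {p : ℕ | 1 ≤ p ∧ p ≤ n ∧ S <+: suf T n p}.ncard - 1) ∧
      ∀ k, r ≤ k → k ≤ r + {p : ℕ | 1 ≤ p ∧ p ≤ n ∧ S <+: suf T n p}.ncard - 1 →
        bwt k = s := by
  set P : Finset ℕ := {p ∈ Icc 1 n | S <+: suf T n p}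
  set c := #{q ∈ Icc 1 n | suf T n q < S}
  have hP : {p : ℕ | 1 ≤ p ∧ p ≤ n ∧ S <+: suf T n p} = P := by ext; simp [P, and_assoc]
  have hinj : Set.InjOn (suf T n) (Icc 1 n) :=
    (suf_injOn T n).mono fun p hp => Set.mem_Iic.2 (by simp at hp; omega)
  have himage : rnk T n '' P = Set.Icc (1 + c) (1 + c + #P - 1) := by
    rw [funext (rnk_eq_one_add_card T n), ← Function.comp_def (1 + ·), Set.image_comp,
      ← coe_image, image_card_filter_lt_filter_isPrefix hinj, coe_Ico, Set.image_const_add_Ico]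
    ext k
    simp only [Set.mem_Ico, Set.mem_Icc, c, P]
    omega
  refine ⟨1 + c, by rw [hP, himage, Set.ncard_coe_finset], fun k hk1 hk2 => ?_⟩
  obtain ⟨p, hp, rfl⟩ : k ∈ rnk T n '' P := by
    rw [hP, Set.ncard_coe_finset] at hk2
    exact himage ▸ ⟨hk1, hk2⟩
  obtain ⟨hpI, hpS⟩ := mem_filter.1 hp
  obtain ⟨hp1, hpn⟩ := mem_Icc.1 hpI
  rw [hbwt _ (by rw [rnk_eq_one_add_card]; omega) (rnk_le T n hp1 hpn), hSA p hp1 hpn,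
    hs p hp1 hpn hpS]

/-- Lemma 5, run-length form: if every occurrence of a nonempty
string `S` as a prefix of a suffix of `T` is preceded by the same symbol `s`,
then the ranks of those suffixes form a consecutive interval on which the BWT is
a single equal-symbol run of `s` of length `|P|`. -/
theorem stmt14 {α : Type*} [LinearOrder α] (T : ℕ → α) (n : ℕ) (sent : α)
    (hn : 2 ≤ n) (hTn : T n = sent) (hT0 : T 0 = sent)
    (hsent : ∀ a : α, a ≠ sent → sent < a)
    (hT : ∀ i, 1 ≤ i → i < n → T i ≠ sent)
    -- the suffix array is the inverse of rank, and BWT k = T (SA k - 1):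
    (SA : ℕ → ℕ) (hSA : ∀ p, 1 ≤ p → p ≤ n → SA (rnk T n p) = p)
    (bwt : ℕ → α) (hbwt : ∀ k, 1 ≤ k → k ≤ n → bwt k = T (SA k - 1))
    (S : List α) (hS : S ≠ []) (s : α)
    (hP : ∃ p, 1 ≤ p ∧ p ≤ n ∧ S <+: suf T n p)
    (hs : ∀ p, 1 ≤ p → p ≤ n → S <+: suf T n p → T (p - 1) = s) :
    ∃ r : ℕ,
      rnk T n '' {p : ℕ | 1 ≤ p ∧ p ≤ n ∧ S <+: suf T n p} =
        Set.Icc r (r + {p : ℕ | 1 ≤ p ∧ p ≤ n ∧ S <+: suf T n p}.ncard - 1) ∧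
      ∀ k, r ≤ k → k ≤ r + {p : ℕ | 1 ≤ p ∧ p ≤ n ∧ S <+: suf T n p}.ncard - 1 →
        bwt k = s :=
  stmt14_general T n SA hSA bwt hbwt S s hs
end
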